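/- For every τ > 0, r ≥ 1 and z ∈ ℝ, with y = τz/√(2(1+τ²)) and c = (1+τ²)^{−(r+1/2)}: ∫_0^∞ φ(z−λ) j⁺(λ|τ²,r) dλ = φ(z) · c · [ ₁F₁(r+1/2, 1/2; y²) + 2y · (Γ(r+1)/Γ(r+1/2)) · ₁F₁(r+1, 3/2; y²) ]. Equivalently, the one-sided z Bayes factor BF₁₀(z|τ²,r) equals c[₁F₁(r+1/2,1/2;y²) + 2y (Γ(r+1)/Γ(r+1/2)) ₁F₁(r+1,3/2;y²)]. -/

import Mathlib

open Real MeasureTheory Filter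

/-- Rising factorial (Pochhammer symbol) `(a)_k`. -/
noncomputable def risingFac (a : ℝ) (k : ℕ) : ℝ := (ascPochhammer ℝ k).eval a

/-- Confluent hypergeometric function `₁F₁(a, b; x)`. -/
noncomputable def oneF1 (a b x : ℝ) : ℝ :=
  ∑' k : ℕ, (risingFac a k / risingFac b k) * x ^ k / (Nat.factorial k : ℝ)

/-- Standard normal density. -/
noncomputable def stdNormalPdf (x : ℝ) : ℝ :=
  (Real.sqrt (2 * Real.pi))⁻¹ * Real.exp (-x ^ 2 / 2)

/-- Normal-moment density `j(λ | τ², r)` of order `r`. -/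
noncomputable def normalMomentPdf (τ r l : ℝ) : ℝ :=
  (l ^ 2) ^ r / ((2 * τ ^ 2) ^ (r + 1 / 2) * Real.Gamma (r + 1 / 2)) *
    Real.exp (-l ^ 2 / (2 * τ ^ 2))

/-- One-sided normal-moment density `j⁺(λ | τ², r) = 2 j(λ | τ², r)` on `(0, ∞)`. -/
noncomputable def normalMomentPdfPos (τ r l : ℝ) : ℝ := 2 * normalMomentPdf τ r l

/-!
Completing the square, `φ(z - λ) j⁺(λ | τ², r)` is a constant multiple of `λ^{2r} e^{-aλ²} e^{zλ}`
with `a = (1 + τ²)/(2τ²)` and `z = 2√a y`. Expanding `e^{zλ}` and integrating term by term reduces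
everything to the half-line Gaussian moments `∫₀^∞ λ^s e^{-aλ²} dλ = ½ a^{-(s+1)/2} Γ((s+1)/2)`;
the interchange is justified because the series of absolute values is the same series at `|y|`.
Since `Γ(x + m) = Γ(x) (x)_m`, `(2m)! = 4^m m! (½)_m` and `(2m+1)! = 4^m m! (3/2)_m`, the even terms
sum to `½ a^{-(r+½)} Γ(r+½) ₁F₁(r+½, ½; y²)` and the odd ones to
`½ a^{-(r+½)} 2y Γ(r+1) ₁F₁(r+1, 3/2; y²)`.
-/

open Set
open scoped Nat

lemma risingFac_succ (a : ℝ) (n : ℕ) : risingFac a (n + 1) = risingFac a n * (a + n) := by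
  simp [risingFac, ascPochhammer_succ_eval]

lemma risingFac_pos {a : ℝ} (ha : 0 < a) (n : ℕ) : 0 < risingFac a n := by
  induction n with
  | zero => simp [risingFac]
  | succ n ih => rw [risingFac_succ]; positivity

lemma Real.Gamma_add_natCast_eq_mul_risingFac {x : ℝ} (hx : 0 < x) (n : ℕ) :
    Gamma (x + n) = Gamma x * risingFac x n := by
  induction n with
  | zero => simp [risingFac]
  | succ n ih =>
    rw [Nat.cast_succ, ← add_assoc, Gamma_add_one (by positivity), ih, risingFac_succ]
    ring

lemma factorial_two_mul_eq_risingFac (m : ℕ) :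
    ((2 * m)! : ℝ) = 4 ^ m * m ! * risingFac (1 / 2) m := by
  induction m with
  | zero => simp [risingFac]
  | succ m ih =>
    rw [show 2 * (m + 1) = 2 * m + 1 + 1 by ring,
      Nat.factorial_succ (2 * m + 1), Nat.factorial_succ (2 * m), Nat.factorial_succ m,
      risingFac_succ]
    push_cast [ih]
    ring

lemma factorial_two_mul_add_one_eq_risingFac (m : ℕ) :
    ((2 * m + 1)! : ℝ) = 4 ^ m * m ! * risingFac (3 / 2) m := by
  induction m with
  | zero => simp [risingFac]
  | succ m ih =>
    rw [show 2 * (m + 1) + 1 = 2 * m + 1 + 1 + 1 by ring,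
      Nat.factorial_succ (2 * m + 1 + 1), Nat.factorial_succ (2 * m + 1), Nat.factorial_succ m,
      risingFac_succ]
    push_cast [ih]
    ring

noncomputable def oneF1Term (a b x : ℝ) (k : ℕ) : ℝ := risingFac a k / risingFac b k * x ^ k / k !

lemma oneF1Term_succ (a b x : ℝ) (k : ℕ) :
    oneF1Term a b x (k + 1) = oneF1Term a b x k * ((a + k) * x / ((b + k) * (k + 1))) := by
  simp only [oneF1Term, risingFac_succ, pow_succ, Nat.factorial_succ, Nat.cast_mul, Nat.cast_succ,
    div_eq_mul_inv, mul_inv]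
  ring

lemma summable_oneF1Term (a x : ℝ) {b : ℝ} (hb : 0 < b) : Summable (oneF1Term a b x) := by
  set C := (|a| / b + 1) * |x|
  have hratio (k : ℕ) : ‖(a + k) * x / ((b + k) * (k + 1))‖ ≤ C * (1 / ((k : ℝ) + 1)) := by
    have hbk : 0 < b + k := by positivity
    have hnum : |a + k| ≤ (|a| / b + 1) * (b + k) := calc
      |a + k| ≤ |a| + k := (abs_add_le _ _).trans_eq (by rw [Nat.abs_cast])
      _ ≤ |a| / b * (b + k) + (b + k) := by
        gcongr
        · rw [div_mul_eq_mul_div, le_div_iff₀ hb]; gcongr; linarith [k.cast_nonneg (α := ℝ)]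
        · linarith
      _ = (|a| / b + 1) * (b + k) := by ring
    rw [Real.norm_eq_abs, abs_div, abs_mul, abs_mul, abs_of_pos hbk,
      abs_of_pos (k.cast_add_one_pos (α := ℝ)), div_le_iff₀ (by positivity)]
    calc |a + k| * |x| ≤ (|a| / b + 1) * (b + k) * |x| := by gcongr
      _ = C * (1 / ((k : ℝ) + 1)) * ((b + k) * (k + 1)) := by simp only [C]; field_simp
  have hsmall : ∀ᶠ k : ℕ in atTop, C * (1 / ((k : ℝ) + 1)) ≤ 1 / 2 := by
    have h := tendsto_one_div_add_atTop_nhds_zero_nat.const_mul C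
    rw [mul_zero] at h
    exact h.eventually (ge_mem_nhds (by norm_num))
  refine summable_of_ratio_norm_eventually_le (r := 1 / 2) (by norm_num) ?_
  filter_upwards [hsmall] with k hk
  rw [oneF1Term_succ, norm_mul, mul_comm (1 / 2 : ℝ)]
  exact mul_le_mul_of_nonneg_left ((hratio k).trans hk) (norm_nonneg _)

noncomputable def gaussMoment (a s : ℝ) : ℝ := ∫ x in Ioi 0, x ^ s * exp (-a * x ^ 2)

lemma gaussMoment_eq {a s : ℝ} (ha : 0 < a) (hs : -1 < s) :
    gaussMoment a s = a ^ (-(s + 1) / 2) / 2 * Gamma ((s + 1) / 2) := by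
  have h := integral_rpow_mul_exp_neg_mul_rpow two_pos hs ha
  simp only [rpow_two] at h
  rw [gaussMoment, h]
  ring

lemma two_mul_sqrt_mul_sq {a : ℝ} (ha : 0 ≤ a) (y : ℝ) : (2 * √a * y) ^ 2 = 4 * a * y ^ 2 := by
  rw [mul_pow, mul_pow, sq_sqrt ha]; ring

lemma pow_two_mul_div_factorial_mul_gaussMoment {a r : ℝ} (ha : 0 < a) (hr : -1 / 2 < r) (y : ℝ)
    (m : ℕ) :
    (2 * √a * y) ^ (2 * m) / ((2 * m)! : ℝ) * gaussMoment a (2 * r + (2 * m : ℕ)) =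
      a ^ (-(r + 1 / 2)) / 2 * Gamma (r + 1 / 2) * oneF1Term (r + 1 / 2) (1 / 2) (y ^ 2) m := by
  have hΓ : Gamma ((2 * r + (2 * m : ℕ) + 1) / 2) =
      Gamma (r + 1 / 2) * risingFac (r + 1 / 2) m := by
    rw [← Gamma_add_natCast_eq_mul_risingFac (by linarith)]
    push_cast; ring_nf
  have hpow : a ^ (-(2 * r + (2 * m : ℕ) + 1) / 2) = a ^ (-(r + 1 / 2)) / a ^ m := by
    rw [← rpow_natCast, ← rpow_sub ha]; push_cast; ring_nf
  have hy : (2 * √a * y) ^ (2 * m) = 4 ^ m * a ^ m * (y ^ 2) ^ m := by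
    rw [pow_mul, two_mul_sqrt_mul_sq ha.le, mul_pow, mul_pow]
  rw [gaussMoment_eq ha (by push_cast; linarith [m.cast_nonneg (α := ℝ)]), hΓ, hpow, hy,
    factorial_two_mul_eq_risingFac, oneF1Term]
  have := risingFac_pos (a := 1 / 2) (by norm_num) m
  field_simp

lemma pow_two_mul_add_one_div_factorial_mul_gaussMoment {a r : ℝ} (ha : 0 < a) (hr : -1 / 2 < r)
    (y : ℝ) (m : ℕ) :
    (2 * √a * y) ^ (2 * m + 1) / ((2 * m + 1)! : ℝ) * gaussMoment a (2 * r + (2 * m + 1 : ℕ)) =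
      a ^ (-(r + 1 / 2)) / 2 * (2 * y * Gamma (r + 1)) * oneF1Term (r + 1) (3 / 2) (y ^ 2) m := by
  have hΓ : Gamma ((2 * r + (2 * m + 1 : ℕ) + 1) / 2) = Gamma (r + 1) * risingFac (r + 1) m := by
    rw [← Gamma_add_natCast_eq_mul_risingFac (by linarith)]
    push_cast; ring_nf
  have hpow : a ^ (-(2 * r + (2 * m + 1 : ℕ) + 1) / 2) = a ^ (-(r + 1 / 2)) / (a ^ m * √a) := by
    rw [sqrt_eq_rpow, ← rpow_natCast, ← rpow_add ha, ← rpow_sub ha]; push_cast; ring_nf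
  have hy : (2 * √a * y) ^ (2 * m + 1) = 4 ^ m * a ^ m * (y ^ 2) ^ m * (2 * √a * y) := by
    rw [pow_succ, pow_mul, two_mul_sqrt_mul_sq ha.le, mul_pow, mul_pow]
  rw [gaussMoment_eq ha (by push_cast; linarith [m.cast_nonneg (α := ℝ)]), hΓ, hpow, hy,
    factorial_two_mul_add_one_eq_risingFac, oneF1Term]
  have := risingFac_pos (a := 3 / 2) (by norm_num) m
  have := sqrt_pos.2 ha
  field_simp

lemma hasSum_pow_div_factorial_mul_gaussMoment {a r : ℝ} (ha : 0 < a) (hr : -1 / 2 < r) (y : ℝ) :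
    HasSum (fun k : ℕ => (2 * √a * y) ^ k / (k ! : ℝ) * gaussMoment a (2 * r + k))
      (a ^ (-(r + 1 / 2)) / 2 * (Gamma (r + 1 / 2) * oneF1 (r + 1 / 2) (1 / 2) (y ^ 2)
        + 2 * y * Gamma (r + 1) * oneF1 (r + 1) (3 / 2) (y ^ 2))) := by
  have heven : HasSum (fun m : ℕ => (2 * √a * y) ^ (2 * m) / ((2 * m)! : ℝ) *
      gaussMoment a (2 * r + (2 * m : ℕ)))
      (a ^ (-(r + 1 / 2)) / 2 * Gamma (r + 1 / 2) * oneF1 (r + 1 / 2) (1 / 2) (y ^ 2)) := by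
    simp_rw [pow_two_mul_div_factorial_mul_gaussMoment ha hr y]
    exact (summable_oneF1Term _ _ (by norm_num)).hasSum.mul_left _
  have hodd : HasSum (fun m : ℕ => (2 * √a * y) ^ (2 * m + 1) / ((2 * m + 1)! : ℝ) *
      gaussMoment a (2 * r + (2 * m + 1 : ℕ)))
      (a ^ (-(r + 1 / 2)) / 2 * (2 * y * Gamma (r + 1)) * oneF1 (r + 1) (3 / 2) (y ^ 2)) := by
    simp_rw [pow_two_mul_add_one_div_factorial_mul_gaussMoment ha hr y]
    exact (summable_oneF1Term _ _ (by norm_num)).hasSum.mul_left _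
  convert HasSum.even_add_odd (f := fun k : ℕ => (2 * √a * y) ^ k / (k ! : ℝ) *
    gaussMoment a (2 * r + k)) heven hodd using 1
  ring

theorem integral_rpow_mul_exp_neg_mul_sq_mul_exp {a r : ℝ} (ha : 0 < a) (hr : -1 / 2 < r)
    (y : ℝ) :
    ∫ x in Ioi 0, x ^ (2 * r) * exp (-a * x ^ 2) * exp (2 * √a * y * x) =
      a ^ (-(r + 1 / 2)) / 2 * (Gamma (r + 1 / 2) * oneF1 (r + 1 / 2) (1 / 2) (y ^ 2)
        + 2 * y * Gamma (r + 1) * oneF1 (r + 1) (3 / 2) (y ^ 2)) := by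
  set b := 2 * √a * y
  let F (k : ℕ) (x : ℝ) : ℝ := b ^ k / k ! * (x ^ (2 * r + k) * exp (-a * x ^ 2))
  have hs (k : ℕ) : -1 < 2 * r + k := by linarith [k.cast_nonneg (α := ℝ)]
  have hF_int (k : ℕ) : Integrable (F k) (volume.restrict (Ioi 0)) :=
    (integrableOn_rpow_mul_exp_neg_mul_sq ha (hs k)).const_mul _
  have hF_norm (k : ℕ) : ∫ x in Ioi 0, ‖F k x‖ = |b| ^ k / k ! * gaussMoment a (2 * r + k) := by
    rw [gaussMoment, ← integral_const_mul]
    refine setIntegral_congr_fun measurableSet_Ioi fun x (hx : 0 < x) => ?_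
    rw [norm_mul, norm_div, norm_pow, Real.norm_natCast, Real.norm_eq_abs,
      norm_of_nonneg (by positivity)]
  have hb : |b| = 2 * √a * |y| := by rw [abs_mul, abs_of_nonneg (by positivity)]
  have hF_sum : Summable fun k => ∫ x in Ioi 0, ‖F k x‖ := by
    simp_rw [hF_norm, hb]
    exact (hasSum_pow_div_factorial_mul_gaussMoment ha hr |y|).summable
  have hF_tsum : ∀ x ∈ Ioi (0 : ℝ),
      HasSum (F · x) (x ^ (2 * r) * exp (-a * x ^ 2) * exp (b * x)) := by
    intro x (hx : 0 < x)
    have hF : (F · x) = fun k => x ^ (2 * r) * exp (-a * x ^ 2) * ((b * x) ^ k / k !) := by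
      funext k
      simp only [F]
      rw [rpow_add hx, rpow_natCast, mul_pow]
      ring
    rw [hF, exp_eq_exp_ℝ]
    exact (NormedSpace.expSeries_div_hasSum_exp (b * x)).mul_left _
  have hF_integral (k : ℕ) : ∫ x in Ioi 0, F k x = b ^ k / k ! * gaussMoment a (2 * r + k) :=
    integral_const_mul _ _
  rw [setIntegral_congr_fun measurableSet_Ioi fun x hx => (hF_tsum x hx).tsum_eq.symm]
  refine (hasSum_integral_of_summable_integral_norm hF_int hF_sum).unique ?_
  simp_rw [hF_integral]
  exact hasSum_pow_div_factorial_mul_gaussMoment ha hr y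

lemma stdNormalPdf_sub_mul_normalMomentPdfPos {τ : ℝ} (hτ : τ ≠ 0) (r z : ℝ) {l : ℝ}
    (hl : 0 ≤ l) :
    stdNormalPdf (z - l) * normalMomentPdfPos τ r l =
      stdNormalPdf z * (2 / ((2 * τ ^ 2) ^ (r + 1 / 2) * Gamma (r + 1 / 2))) *
        (l ^ (2 * r) * exp (-((1 + τ ^ 2) / (2 * τ ^ 2)) * l ^ 2) * exp (z * l)) := by
  have hexp : exp (-(z - l) ^ 2 / 2) * exp (-l ^ 2 / (2 * τ ^ 2)) =
      exp (-z ^ 2 / 2) * (exp (-((1 + τ ^ 2) / (2 * τ ^ 2)) * l ^ 2) * exp (z * l)) := by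
    simp only [← exp_add]
    congr 1
    field_simp
    ring
  rw [rpow_mul hl, rpow_two]
  simp only [stdNormalPdf, normalMomentPdfPos, normalMomentPdf]
  linear_combination ((√(2 * π))⁻¹ * 2 * (l ^ 2) ^ r /
    ((2 * τ ^ 2) ^ (r + 1 / 2) * Gamma (r + 1 / 2))) * hexp

/-- Theorem 2.2: one-sided `z` Bayes factor. -/
theorem one_sided_z_bayes_factor (τ r z y c : ℝ) (hτ : 0 < τ) (hr : 1 ≤ r)
    (hy : y = τ * z / Real.sqrt (2 * (1 + τ ^ 2)))
    (hc : c = (1 + τ ^ 2) ^ (-(r + 1 / 2))) :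
    ∫ l in Set.Ioi (0 : ℝ), stdNormalPdf (z - l) * normalMomentPdfPos τ r l
      = stdNormalPdf z * c *
          (oneF1 (r + 1 / 2) (1 / 2) (y ^ 2)
            + 2 * y * (Real.Gamma (r + 1) / Real.Gamma (r + 1 / 2)) *
                oneF1 (r + 1) (3 / 2) (y ^ 2)) := by
  set a := (1 + τ ^ 2) / (2 * τ ^ 2) with ha_def
  have ha : 0 < a := by positivity
  have hz : z = 2 * √a * y := by
    have hsa : √a = √(2 * (1 + τ ^ 2)) / (2 * τ) := by
      rw [show a = 2 * (1 + τ ^ 2) / (2 * τ) ^ 2 by rw [ha_def]; field_simp,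
        sqrt_div' _ (by positivity), sqrt_sq (by positivity)]
    have := sqrt_pos.2 (show 0 < 2 * (1 + τ ^ 2) by positivity)
    rw [hsa, hy]
    field_simp
  have hc' : a ^ (-(r + 1 / 2)) = c * (2 * τ ^ 2) ^ (r + 1 / 2) := by
    rw [hc, show 1 + τ ^ 2 = a * (2 * τ ^ 2) by rw [ha_def]; field_simp,
      mul_rpow ha.le (by positivity), rpow_neg (by positivity : (0 : ℝ) ≤ 2 * τ ^ 2), mul_assoc,
      inv_mul_cancel₀ (by positivity), mul_one]
  have hΓ : 0 < Gamma (r + 1 / 2) := Gamma_pos_of_pos (by linarith)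
  calc ∫ l in Ioi 0, stdNormalPdf (z - l) * normalMomentPdfPos τ r l
      = ∫ l in Ioi 0, stdNormalPdf z * (2 / ((2 * τ ^ 2) ^ (r + 1 / 2) * Gamma (r + 1 / 2))) *
          (l ^ (2 * r) * exp (-a * l ^ 2) * exp (2 * √a * y * l)) :=
        setIntegral_congr_fun measurableSet_Ioi fun l (hl : 0 < l) => by
          rw [stdNormalPdf_sub_mul_normalMomentPdfPos hτ.ne' r z hl.le, ← hz]
    _ = _ := by
      rw [integral_const_mul, integral_rpow_mul_exp_neg_mul_sq_mul_exp ha (by linarith) y, hc']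
      field_simp
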